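/- Let A be a real m×n matrix with m ≥ n, all rows nonzero, and Ax = b, and let σ > 0 satisfy ‖A v‖ ≥ σ·‖v‖ for all v ∈ ℝ^n. Then for every x_0 ∈ ℝ^n, every ε with 0 < ε < ‖A‖, and every natural number k with k ≥ 2·log(‖A‖/ε)·‖A‖_F²/σ², the random Kaczmarz process of length k satisfies E[ ‖A x_k − b‖² ] ≤ ε²·‖x_0 − x‖². -/

import Mathlib

noncomputable section

/-- The `i`-th row of `A` as a vector in Euclidean space. -/
def rowv {m n : ℕ} (A : Matrix (Fin m) (Fin n) ℝ) (i : Fin m) : EuclideanSpace ℝ (Fin n) :=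
  WithLp.toLp 2 (fun j => A i j)

/-- Matrix-vector multiplication, landing in Euclidean space. -/
def mulV {m n : ℕ} (A : Matrix (Fin m) (Fin n) ℝ) (v : EuclideanSpace ℝ (Fin n)) :
    EuclideanSpace ℝ (Fin m) := WithLp.toLp 2 (fun i => ∑ j, A i j * v j)

/-- The square of the Frobenius norm `‖A‖_F²`. -/
def frobSq {m n : ℕ} (A : Matrix (Fin m) (Fin n) ℝ) : ℝ := ∑ i, ∑ j, (A i j) ^ 2

/-- The operator norm `‖A‖` (ℓ² → ℓ²). -/
def opN {m n : ℕ} (A : Matrix (Fin m) (Fin n) ℝ) : ℝ :=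
  ‖LinearMap.toContinuousLinearMap (Matrix.toEuclideanLin A)‖

/-- Orthogonal projection of `w` onto the hyperplane `{v : ⟨a_i, v⟩ = b_i}`. -/
def proj {m n : ℕ} (A : Matrix (Fin m) (Fin n) ℝ) (b : EuclideanSpace ℝ (Fin m)) (i : Fin m)
    (w : EuclideanSpace ℝ (Fin n)) : EuclideanSpace ℝ (Fin n) :=
  w + ((b i - inner (𝕜 := ℝ) (rowv A i) w) / ‖rowv A i‖ ^ 2) • rowv A i

/-- The Kaczmarz trajectory: `traj A b x0 ω j` is `x_j(ω) = π_{ω_j} ⋯ π_{ω_1} x_0`. -/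
def traj {m n k : ℕ} (A : Matrix (Fin m) (Fin n) ℝ) (b : EuclideanSpace ℝ (Fin m))
    (x0 : EuclideanSpace ℝ (Fin n)) (ω : Fin k → Fin m) : ℕ → EuclideanSpace ℝ (Fin n)
  | 0 => x0
  | j + 1 => if h : j < k then proj A b (ω ⟨j, h⟩) (traj A b x0 ω j) else traj A b x0 ω j

/-- The weight `∏_j ‖a_{ω_j}‖²/‖A‖_F²` of an index sequence `ω` for the random Kaczmarz
process. -/
def wt {m n k : ℕ} (A : Matrix (Fin m) (Fin n) ℝ) (ω : Fin k → Fin m) : ℝ :=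
  ∏ j, ‖rowv A (ω j)‖ ^ 2 / frobSq A

end

/-! A Kaczmarz step replaces the error `w - x` by its component orthogonal to the chosen row `aᵢ`.
Averaged with the weights `‖aᵢ‖²/‖A‖_F²`, the squared error becomes
`‖w - x‖² - ‖A(w - x)‖²/‖A‖_F² ≤ (1 - σ²/‖A‖_F²)‖w - x‖² ≤ exp(-σ²/‖A‖_F²)‖w - x‖²`, so after `k`
steps `E‖x_k - x‖² ≤ exp(-kσ²/‖A‖_F²)‖x₀ - x‖²`. Since `‖A x_k - b‖ ≤ ‖A‖‖x_k - x‖` and the bound on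
`k` gives `‖A‖² exp(-kσ²/‖A‖_F²) ≤ ε²`, the residual bound follows. -/

open Finset
open scoped InnerProductSpace

theorem sum_pi_fin_succ_eq_sum_snoc {α M : Type*} [Fintype α] [AddCommMonoid M] {k : ℕ}
    (g : (Fin (k + 1) → α) → M) :
    ∑ ω, g ω = ∑ ω : Fin k → α, ∑ i, g (Fin.snoc ω i) := by
  rw [← Fintype.sum_prod_type_right']
  exact (Fintype.sum_equiv (Fin.snocEquiv fun _ => α) _ _ fun _ => rfl).symm

theorem sq_norm_mul_norm_sub_proj_sq {E : Type*} [NormedAddCommGroup E] [InnerProductSpace ℝ E]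
    (a u : E) :
    ‖a‖ ^ 2 * ‖u - (⟪a, u⟫_ℝ / ‖a‖ ^ 2) • a‖ ^ 2 = ‖a‖ ^ 2 * ‖u‖ ^ 2 - ⟪a, u⟫_ℝ ^ 2 := by
  -- Multiplying by `‖a‖²` makes the identity hold also at `a = 0`, where the division is junk.
  rcases eq_or_ne a 0 with rfl | ha
  · simp
  rw [norm_sub_sq_real, real_inner_smul_right, norm_smul, Real.norm_eq_abs, mul_pow, sq_abs,
    real_inner_comm u a]
  field_simp
  ring

theorem sq_mul_exp_neg_pow_le_sq {N ε s : ℝ} (hN : 0 < N) (hε : 0 < ε) {k : ℕ}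
    (hk : 2 * Real.log (N / ε) ≤ k * s) :
    N ^ 2 * Real.exp (-s) ^ k ≤ ε ^ 2 := by
  have hdecay : Real.exp (-s) ^ k ≤ (ε / N) ^ 2 := by
    calc Real.exp (-s) ^ k = Real.exp (-(k * s)) := by rw [← Real.exp_nat_mul]; ring_nf
      _ ≤ Real.exp (-(2 * Real.log (N / ε))) := Real.exp_le_exp.mpr (by linarith)
      _ = (ε / N) ^ 2 := by
        rw [← mul_neg, ← Real.log_inv, inv_div, ← Real.log_rpow (by positivity),
          Real.exp_log (by positivity)]
        norm_cast
  calc N ^ 2 * Real.exp (-s) ^ k ≤ N ^ 2 * (ε / N) ^ 2 := by gcongr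
    _ = ε ^ 2 := by field_simp

section Matrix

variable {m n : ℕ} (A : Matrix (Fin m) (Fin n) ℝ)

theorem mulV_apply (v : EuclideanSpace ℝ (Fin n)) (i : Fin m) :
    mulV A v i = ⟪rowv A i, v⟫_ℝ := by
  simp [mulV, rowv, PiLp.inner_apply, mul_comm]

theorem mulV_sub (v w : EuclideanSpace ℝ (Fin n)) : mulV A (v - w) = mulV A v - mulV A w := by
  ext i
  simp only [mulV, PiLp.sub_apply, mul_sub, sum_sub_distrib]

theorem norm_mulV_sq (v : EuclideanSpace ℝ (Fin n)) :
    ‖mulV A v‖ ^ 2 = ∑ i, ⟪rowv A i, v⟫_ℝ ^ 2 := by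
  simp only [EuclideanSpace.norm_sq_eq, mulV_apply, Real.norm_eq_abs, sq_abs]

theorem frobSq_eq_sum_norm_rowv_sq : frobSq A = ∑ i, ‖rowv A i‖ ^ 2 := by
  simp only [frobSq, EuclideanSpace.norm_sq_eq, rowv, Real.norm_eq_abs, sq_abs]

theorem frobSq_nonneg : 0 ≤ frobSq A := by
  unfold frobSq; positivity

theorem norm_mulV_sq_le (v : EuclideanSpace ℝ (Fin n)) :
    ‖mulV A v‖ ^ 2 ≤ frobSq A * ‖v‖ ^ 2 := by
  rw [norm_mulV_sq, frobSq_eq_sum_norm_rowv_sq, sum_mul]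
  refine sum_le_sum fun i _ => ?_
  rw [← mul_pow, ← sq_abs]
  gcongr
  exact abs_real_inner_le_norm _ _

theorem mulV_eq_toEuclideanLin (v : EuclideanSpace ℝ (Fin n)) :
    mulV A v = Matrix.toEuclideanLin A v := by
  ext i
  simp [mulV, Matrix.toLpLin_apply, Matrix.mulVec, dotProduct]

theorem norm_mulV_le_opN (v : EuclideanSpace ℝ (Fin n)) : ‖mulV A v‖ ≤ opN A * ‖v‖ := by
  rw [mulV_eq_toEuclideanLin]
  exact (LinearMap.toContinuousLinearMap (Matrix.toEuclideanLin A)).le_opNorm v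

theorem opN_sq_le_frobSq : opN A ^ 2 ≤ frobSq A := by
  have h : opN A ≤ √(frobSq A) := by
    refine ContinuousLinearMap.opNorm_le_bound _ (Real.sqrt_nonneg _) fun v => ?_
    rw [LinearMap.coe_toContinuousLinearMap', ← mulV_eq_toEuclideanLin, ← sq_le_sq₀ (norm_nonneg _)
      (by positivity), mul_pow, Real.sq_sqrt (frobSq_nonneg A)]
    exact norm_mulV_sq_le A v
  calc opN A ^ 2 ≤ √(frobSq A) ^ 2 := by gcongr; exact norm_nonneg _
    _ = frobSq A := Real.sq_sqrt (frobSq_nonneg A)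

end Matrix

section Kaczmarz

variable {m n : ℕ} (A : Matrix (Fin m) (Fin n) ℝ) (b : EuclideanSpace ℝ (Fin m))
  {x : EuclideanSpace ℝ (Fin n)}

theorem proj_sub_of_mulV_eq (hAx : mulV A x = b) (i : Fin m) (w : EuclideanSpace ℝ (Fin n)) :
    proj A b i w - x = (w - x) - (⟪rowv A i, w - x⟫_ℝ / ‖rowv A i‖ ^ 2) • rowv A i := by
  have hb : b i = ⟪rowv A i, x⟫_ℝ := by rw [← hAx, mulV_apply]
  simp only [proj, hb, inner_sub_right]
  module

theorem norm_mulV_sub_sq_le (hAx : mulV A x = b) (v : EuclideanSpace ℝ (Fin n)) :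
    ‖mulV A v - b‖ ^ 2 ≤ opN A ^ 2 * ‖v - x‖ ^ 2 := by
  rw [← hAx, ← mulV_sub, ← mul_pow]
  gcongr
  exact norm_mulV_le_opN A _

theorem sum_weight_mul_norm_proj_sub_sq (hAx : mulV A x = b) (hF : frobSq A ≠ 0)
    (w : EuclideanSpace ℝ (Fin n)) :
    ∑ i, ‖rowv A i‖ ^ 2 / frobSq A * ‖proj A b i w - x‖ ^ 2 =
      ‖w - x‖ ^ 2 - ‖mulV A (w - x)‖ ^ 2 / frobSq A := by
  simp_rw [div_mul_eq_mul_div, proj_sub_of_mulV_eq A b hAx, sq_norm_mul_norm_sub_proj_sq,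
    ← sum_div, sum_sub_distrib, ← sum_mul, ← frobSq_eq_sum_norm_rowv_sq, ← norm_mulV_sq]
  field_simp

theorem sum_weight_mul_norm_proj_sub_sq_le (hAx : mulV A x = b) (hF : 0 < frobSq A) {σ : ℝ}
    (hσ : 0 ≤ σ) (hlow : ∀ v : EuclideanSpace ℝ (Fin n), σ * ‖v‖ ≤ ‖mulV A v‖)
    (w : EuclideanSpace ℝ (Fin n)) :
    ∑ i, ‖rowv A i‖ ^ 2 / frobSq A * ‖proj A b i w - x‖ ^ 2 ≤
      Real.exp (-(σ ^ 2 / frobSq A)) * ‖w - x‖ ^ 2 := by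
  have hAu : σ ^ 2 * ‖w - x‖ ^ 2 ≤ ‖mulV A (w - x)‖ ^ 2 := by
    rw [← mul_pow]
    exact pow_le_pow_left₀ (by positivity) (hlow _) 2
  calc _ = ‖w - x‖ ^ 2 - ‖mulV A (w - x)‖ ^ 2 / frobSq A :=
        sum_weight_mul_norm_proj_sub_sq A b hAx hF.ne' w
    _ ≤ (1 - σ ^ 2 / frobSq A) * ‖w - x‖ ^ 2 := by
        rw [one_sub_mul, div_mul_eq_mul_div]
        gcongr
    _ ≤ Real.exp (-(σ ^ 2 / frobSq A)) * ‖w - x‖ ^ 2 := by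
        gcongr
        linarith [Real.add_one_le_exp (-(σ ^ 2 / frobSq A))]

variable (x0 : EuclideanSpace ℝ (Fin n))

theorem traj_snoc_of_le {k : ℕ} (ω : Fin k → Fin m) (i : Fin m) {j : ℕ} (hj : j ≤ k) :
    traj A b x0 (Fin.snoc ω i) j = traj A b x0 ω j := by
  induction j with
  | zero => rfl
  | succ j ih =>
    have hjk : j < k := hj
    have hcast : (⟨j, hjk.trans k.lt_succ_self⟩ : Fin (k + 1)) = Fin.castSucc ⟨j, hjk⟩ := rfl
    simp only [traj, dif_pos hjk, dif_pos (hjk.trans k.lt_succ_self), hcast, Fin.snoc_castSucc,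
      ih hjk.le]

theorem traj_snoc {k : ℕ} (ω : Fin k → Fin m) (i : Fin m) :
    traj A b x0 (Fin.snoc ω i) (k + 1) = proj A b i (traj A b x0 ω k) := by
  have hlast : (⟨k, k.lt_succ_self⟩ : Fin (k + 1)) = Fin.last k := rfl
  simp only [traj, dif_pos k.lt_succ_self, hlast, Fin.snoc_last, traj_snoc_of_le A b x0 ω i le_rfl]

theorem wt_snoc {k : ℕ} (ω : Fin k → Fin m) (i : Fin m) :
    wt A (Fin.snoc ω i) = wt A ω * (‖rowv A i‖ ^ 2 / frobSq A) := by
  simp only [wt, Fin.prod_univ_castSucc, Fin.snoc_castSucc, Fin.snoc_last]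

theorem wt_nonneg {k : ℕ} (ω : Fin k → Fin m) : 0 ≤ wt A ω :=
  prod_nonneg fun _ _ => div_nonneg (sq_nonneg _) (frobSq_nonneg A)

theorem sum_wt_mul_norm_traj_sub_sq_le (hAx : mulV A x = b) (hF : 0 < frobSq A) {σ : ℝ}
    (hσ : 0 ≤ σ) (hlow : ∀ v : EuclideanSpace ℝ (Fin n), σ * ‖v‖ ≤ ‖mulV A v‖) (k : ℕ) :
    ∑ ω : Fin k → Fin m, wt A ω * ‖traj A b x0 ω k - x‖ ^ 2 ≤
      Real.exp (-(σ ^ 2 / frobSq A)) ^ k * ‖x0 - x‖ ^ 2 := by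
  set c := Real.exp (-(σ ^ 2 / frobSq A))
  induction k with
  | zero => simp [wt, traj]
  | succ k ih =>
    calc _ = ∑ ω : Fin k → Fin m, wt A ω *
          ∑ i, ‖rowv A i‖ ^ 2 / frobSq A * ‖proj A b i (traj A b x0 ω k) - x‖ ^ 2 := by
          simp only [sum_pi_fin_succ_eq_sum_snoc, wt_snoc, traj_snoc, mul_sum, mul_assoc]
      _ ≤ ∑ ω : Fin k → Fin m, wt A ω * (c * ‖traj A b x0 ω k - x‖ ^ 2) := by
          gcongr with ω
          · exact wt_nonneg A ω
          · exact sum_weight_mul_norm_proj_sub_sq_le A b hAx hF hσ hlow _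
      _ = c * ∑ ω : Fin k → Fin m, wt A ω * ‖traj A b x0 ω k - x‖ ^ 2 := by
          simp only [mul_sum, mul_left_comm]
      _ ≤ c * (c ^ k * ‖x0 - x‖ ^ 2) := by gcongr
      _ = c ^ (k + 1) * ‖x0 - x‖ ^ 2 := by ring

end Kaczmarz

theorem residual_bound_general {m n : ℕ} (A : Matrix (Fin m) (Fin n) ℝ)
    (x : EuclideanSpace ℝ (Fin n))
    (b : EuclideanSpace ℝ (Fin m)) (hAx : mulV A x = b)
    (σ : ℝ) (hσ : 0 < σ) (hlow : ∀ v : EuclideanSpace ℝ (Fin n), σ * ‖v‖ ≤ ‖mulV A v‖)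
    (x0 : EuclideanSpace ℝ (Fin n)) (ε : ℝ) (hε0 : 0 < ε) (hε1 : ε < opN A)
    (k : ℕ) (hk : (k : ℝ) ≥ 2 * Real.log (opN A / ε) * frobSq A / σ ^ 2) :
    ∑ ω : Fin k → Fin m, wt A ω * ‖mulV A (traj A b x0 ω k) - b‖ ^ 2 ≤
      ε ^ 2 * ‖x0 - x‖ ^ 2 := by
  have hop : 0 < opN A := hε0.trans hε1
  have hF : 0 < frobSq A := (pow_pos hop 2).trans_le (opN_sq_le_frobSq A)
  have hkσ : 2 * Real.log (opN A / ε) ≤ k * (σ ^ 2 / frobSq A) := by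
    rw [ge_iff_le, div_le_iff₀ (by positivity)] at hk
    rw [mul_div_assoc', le_div_iff₀ hF]
    linarith
  calc ∑ ω : Fin k → Fin m, wt A ω * ‖mulV A (traj A b x0 ω k) - b‖ ^ 2
      ≤ ∑ ω : Fin k → Fin m, wt A ω * (opN A ^ 2 * ‖traj A b x0 ω k - x‖ ^ 2) := by
        gcongr with ω
        · exact wt_nonneg A ω
        · exact norm_mulV_sub_sq_le A b hAx _
    _ = opN A ^ 2 * ∑ ω : Fin k → Fin m, wt A ω * ‖traj A b x0 ω k - x‖ ^ 2 := by
        simp only [mul_sum, mul_left_comm]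
    _ ≤ opN A ^ 2 * (Real.exp (-(σ ^ 2 / frobSq A)) ^ k * ‖x0 - x‖ ^ 2) := by
        gcongr
        exact sum_wt_mul_norm_traj_sub_sq_le A b x0 hAx hF hσ.le hlow k
    _ ≤ ε ^ 2 * ‖x0 - x‖ ^ 2 := by
        rw [← mul_assoc]
        gcongr
        exact sq_mul_exp_neg_pow_le_sq hop hε0 hkσ

/-- **Residual bound via the Strohmer–Vershynin rate.** If `σ > 0` satisfies `‖Av‖ ≥ σ‖v‖`
for all `v`, `0 < ε < ‖A‖`, and `k ≥ 2 log(‖A‖/ε) ‖A‖_F²/σ²`, then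
`E ‖A x_k − b‖² ≤ ε² ‖x₀ − x‖²`. -/
theorem residual_bound {m n : ℕ} (A : Matrix (Fin m) (Fin n) ℝ) (hmn : m ≥ n)
    (hrows : ∀ i, rowv A i ≠ 0) (x : EuclideanSpace ℝ (Fin n))
    (b : EuclideanSpace ℝ (Fin m)) (hAx : mulV A x = b)
    (σ : ℝ) (hσ : 0 < σ) (hlow : ∀ v : EuclideanSpace ℝ (Fin n), σ * ‖v‖ ≤ ‖mulV A v‖)
    (x0 : EuclideanSpace ℝ (Fin n)) (ε : ℝ) (hε0 : 0 < ε) (hε1 : ε < opN A)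
    (k : ℕ) (hk : (k : ℝ) ≥ 2 * Real.log (opN A / ε) * frobSq A / σ ^ 2) :
    ∑ ω : Fin k → Fin m, wt A ω * ‖mulV A (traj A b x0 ω k) - b‖ ^ 2 ≤
      ε ^ 2 * ‖x0 - x‖ ^ 2 :=
  residual_bound_general A x b hAx σ hσ hlow x0 ε hε0 hε1 k hk
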